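/- arXiv:2509.16117 — 2 statements merged into one kernel-verified Lean document; each statement's English description precedes it below -/
import Mathlib

section
/- Fix x_t with α := α(x_t) ∈ (0,1), vectors v^old, v⁺, v⁻ ∈ ℝ^n satisfying v^old = α v⁺ + (1−α)v⁻, and β > 0. For an unknown u ∈ ℝ^n define v_u⁺ := (1−β)v^old + β u and v_u⁻ := (1+β)v^old − β u. Then the pointwise loss L(u) = α‖v_u⁺ − v⁺‖² + (1−α)‖v_u⁻ − v⁻‖² is minimized uniquely at u* = v^old + (2/β)Δ, where Δ = α(v⁺ − v^old). -/
/-! Writing `u = u* + w`, the two residuals become `A + β w` and `B - β w`, where `A`, `B` are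
the residuals at `u*`. The choice of `u*` makes `α A = (1 - α) B` (the first-order condition), so
the cross terms cancel and `L (u* + w) = L u* + ‖β w‖²`. -/

section

variable {E : Type*} [NormedAddCommGroup E] [InnerProductSpace ℝ E]

theorem weighted_norm_sq_add_sub_eq {a b : ℝ} (hab : a + b = 1) {A B : E} (h : a • A = b • B)
    (x : E) :
    a * ‖A + x‖ ^ 2 + b * ‖B - x‖ ^ 2 = a * ‖A‖ ^ 2 + b * ‖B‖ ^ 2 + ‖x‖ ^ 2 := by
  have hcross : a * inner ℝ A x = b * inner ℝ B x := by
    rw [← real_inner_smul_left, ← real_inner_smul_left, h]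
  rw [norm_add_sq_real, norm_sub_sq_real]
  linear_combination 2 * hcross + ‖x‖ ^ 2 * hab

def implicitLoss (α β : ℝ) (vold vp vm u : E) : ℝ :=
  α * ‖((1 - β) • vold + β • u) - vp‖ ^ 2 + (1 - α) * ‖((1 + β) • vold - β • u) - vm‖ ^ 2

variable {α β : ℝ} {vold vp vm : E}

theorem implicitLoss_optimum_residuals_balance (hβ : β ≠ 0)
    (hmix : vold = α • vp + (1 - α) • vm) :
    α • (((1 - β) • vold + β • (vold + (2 / β) • (α • (vp - vold)))) - vp) =
      (1 - α) • (((1 + β) • vold - β • (vold + (2 / β) • (α • (vp - vold)))) - vm) := by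
  rw [hmix]
  match_scalars <;> field_simp <;> ring

theorem implicitLoss_optimum_add (hβ : β ≠ 0) (hmix : vold = α • vp + (1 - α) • vm) (w : E) :
    implicitLoss α β vold vp vm (vold + (2 / β) • (α • (vp - vold)) + w) =
      implicitLoss α β vold vp vm (vold + (2 / β) • (α • (vp - vold))) + ‖β • w‖ ^ 2 := by
  set ustar := vold + (2 / β) • (α • (vp - vold))
  have hplus : ((1 - β) • vold + β • (ustar + w)) - vp =
      ((1 - β) • vold + β • ustar - vp) + β • w := by module
  have hminus : ((1 + β) • vold - β • (ustar + w)) - vm =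
      ((1 + β) • vold - β • ustar - vm) - β • w := by module
  rw [implicitLoss, implicitLoss, hplus, hminus]
  exact weighted_norm_sq_add_sub_eq (add_sub_cancel α 1)
    (implicitLoss_optimum_residuals_balance hβ hmix) _

end

theorem stmt6_general (n : ℕ) (α β : ℝ) (hβ : 0 < β)
    (vold vp vm : EuclideanSpace ℝ (Fin n))
    (hmix : vold = α • vp + (1 - α) • vm) :
    ∀ u : EuclideanSpace ℝ (Fin n), u ≠ vold + (2 / β) • (α • (vp - vold)) →
      α * ‖((1 - β) • vold + β • (vold + (2 / β) • (α • (vp - vold)))) - vp‖ ^ 2 +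
        (1 - α) * ‖((1 + β) • vold - β • (vold + (2 / β) • (α • (vp - vold)))) - vm‖ ^ 2 <
      α * ‖((1 - β) • vold + β • u) - vp‖ ^ 2 +
        (1 - α) * ‖((1 + β) • vold - β • u) - vm‖ ^ 2 := by
  intro u hu
  set ustar := vold + (2 / β) • (α • (vp - vold))
  have hloss := implicitLoss_optimum_add hβ.ne' hmix (u - ustar)
  rw [add_sub_cancel] at hloss
  have hpos : 0 < ‖β • (u - ustar)‖ ^ 2 := by
    have : β • (u - ustar) ≠ 0 := smul_ne_zero hβ.ne' (sub_ne_zero.mpr hu)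
    positivity
  change implicitLoss α β vold vp vm ustar < implicitLoss α β vold vp vm u
  linarith

/-- The pointwise implicit-parameterization loss is uniquely minimized at
u* = v_old + (2/β) Δ where Δ = α (v⁺ − v_old). -/
theorem stmt6 (n : ℕ) (α β : ℝ) (hα : α ∈ Set.Ioo (0:ℝ) 1) (hβ : 0 < β)
    (vold vp vm : EuclideanSpace ℝ (Fin n))
    (hmix : vold = α • vp + (1 - α) • vm) :
    ∀ u : EuclideanSpace ℝ (Fin n), u ≠ vold + (2 / β) • (α • (vp - vold)) →
      α * ‖((1 - β) • vold + β • (vold + (2 / β) • (α • (vp - vold)))) - vp‖ ^ 2 +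
        (1 - α) * ‖((1 + β) • vold - β • (vold + (2 / β) • (α • (vp - vold)))) - vm‖ ^ 2 <
      α * ‖((1 - β) • vold + β • u) - vp‖ ^ 2 +
        (1 - α) * ‖((1 + β) • vold - β • u) - vm‖ ^ 2 :=
  stmt6_general n α β hβ vold vp vm hmix
end

section
/- For minimizing E[r‖v_θ⁺ − v‖² + (1−r)‖v_θ⁻ − v‖²] over measurable v_θ where v_θ⁺ = (1−β)v^old + βv_θ, v_θ⁻ = (1+β)v^old − βv_θ, expectation over c, t, x_0 ∼ π_old, noise ε, and x_t = α_t x_0 + σ_t ε, v = α̇_t x_0 + σ̇_t ε: the pointwise minimizer satisfies v_θ*(x_t,c,t) = v^old(x_t,c,t) + (2/β)Δ(x_t,c,t), where Δ = α(x_t)(v⁺ − v^old) and v⁺, v^old, v⁻ are the optimal velocity predictors for π⁺, π_old, π⁻. -/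
open MeasureTheory RealInnerProductSpace

set_option maxHeartbeats 2000000 in
/-- Policy Optimization (DiffusionNFT, Theorem 2), pointwise in (x_t, c, t).
Given the reward-reweighting identities relating the posterior of π_old to those of π⁺ and
π⁻, the expected implicit-parameterization loss over the posterior is minimized at
v_old + (2/β) Δ with Δ = α (v⁺ − v_old), where v⁺, v_old, v⁻ are the optimal (posterior-mean)
velocity predictors. -/
theorem stmt8 (d n : ℕ) (β : ℝ) (hβ : 0 < β)
    (qold qp qm r : EuclideanSpace ℝ (Fin d) → ℝ)
    (V : EuclideanSpace ℝ (Fin d) → EuclideanSpace ℝ (Fin n))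
    (α : ℝ) (hα : α ∈ Set.Ioo (0:ℝ) 1)
    (hr : ∀ x, r x ∈ Set.Icc (0:ℝ) 1)
    (hqold_nonneg : ∀ x, 0 ≤ qold x)
    (hqold_meas : Measurable qold) (hqp_meas : Measurable qp) (hqm_meas : Measurable qm)
    (hr_meas : Measurable r) (hV_meas : Measurable V)
    (hrew_p : ∀ x, r x * qold x = α * qp x)
    (hrew_m : ∀ x, (1 - r x) * qold x = (1 - α) * qm x)
    (hq_old1 : ∫ x, qold x = 1) (hq_p1 : ∫ x, qp x = 1) (hq_m1 : ∫ x, qm x = 1)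
    (hint2 : Integrable (fun x => qold x * ‖V x‖ ^ 2))
    (hintV : Integrable (fun x => qold x • V x))
    (hint0 : Integrable qold)
    (vold vp vm : EuclideanSpace ℝ (Fin n))
    (hvold : vold = ∫ x, qold x • V x)
    (hvp : vp = ∫ x, qp x • V x)
    (hvm : vm = ∫ x, qm x • V x) :
    ∀ u : EuclideanSpace ℝ (Fin n),
      (∫ x, qold x *
          (r x * ‖(1 - β) • vold + β • (vold + (2 / β) • (α • (vp - vold))) - V x‖ ^ 2 +
           (1 - r x) * ‖(1 + β) • vold - β • (vold + (2 / β) • (α • (vp - vold))) - V x‖ ^ 2)) ≤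
      ∫ x, qold x *
          (r x * ‖(1 - β) • vold + β • u - V x‖ ^ 2 +
           (1 - r x) * ‖(1 + β) • vold - β • u - V x‖ ^ 2) := by
  intro u
  obtain ⟨hα0, hα1⟩ := hα
  set us : EuclideanSpace ℝ (Fin n) := vold + (2 / β) • (α • (vp - vold)) with hus
  set A : EuclideanSpace ℝ (Fin n) := (1 - β) • vold with hA
  set B : EuclideanSpace ℝ (Fin n) := (1 + β) • vold with hB
  set δ : EuclideanSpace ℝ (Fin n) := β • u - β • us with hδ
  -- generic integrability of the loss integrand
  have hsq : ∀ (w v : EuclideanSpace ℝ (Fin n)), ‖w - v‖ ^ 2 ≤ 2 * ‖w‖^2 + 2 * ‖v‖^2 := by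
    intro w v
    have h := norm_sub_le w v
    nlinarith [norm_nonneg (w - v), norm_nonneg w, norm_nonneg v, sq_nonneg (‖w‖ - ‖v‖)]
  -- generic integrability of the loss integrand
  have hGint : ∀ w1 w2 : EuclideanSpace ℝ (Fin n),
      Integrable (fun x => qold x * (r x * ‖w1 - V x‖ ^ 2 + (1 - r x) * ‖w2 - V x‖ ^ 2)) := by
    intro w1 w2
    have hg : Integrable (fun x => qold x * (2 * ‖w1‖^2 + 2 * ‖w2‖^2 + 4 * ‖V x‖^2)) := by
      have he : (fun x => qold x * (2 * ‖w1‖^2 + 2 * ‖w2‖^2 + 4 * ‖V x‖^2))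
          = fun x => (2 * ‖w1‖^2 + 2 * ‖w2‖^2) * qold x + 4 * (qold x * ‖V x‖^2) := by
        funext x; ring
      rw [he]
      exact (hint0.const_mul _).add (hint2.const_mul 4)
    refine Integrable.mono' hg ?_ ?_
    · apply Measurable.aestronglyMeasurable
      exact hqold_meas.mul ((hr_meas.mul (((measurable_const.sub hV_meas).norm).pow measurable_const)).add
        ((measurable_const.sub hr_meas).mul (((measurable_const.sub hV_meas).norm).pow measurable_const)))
    · refine Filter.Eventually.of_forall fun x => ?_
      have hr0 := (hr x).1; have hr1 := (hr x).2
      have hq := hqold_nonneg x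
      have hX := hsq w1 (V x)
      have hY := hsq w2 (V x)
      have a1 : r x * ‖w1 - V x‖ ^ 2 ≤ ‖w1 - V x‖ ^ 2 :=
        mul_le_of_le_one_left (sq_nonneg _) hr1
      have a2 : (1 - r x) * ‖w2 - V x‖ ^ 2 ≤ ‖w2 - V x‖ ^ 2 :=
        mul_le_of_le_one_left (sq_nonneg _) (by linarith)
      have hb : r x * ‖w1 - V x‖ ^ 2 + (1 - r x) * ‖w2 - V x‖ ^ 2
          ≤ 2 * ‖w1‖^2 + 2 * ‖w2‖^2 + 4 * ‖V x‖^2 := by linarith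
      have hnn : (0:ℝ) ≤ r x * ‖w1 - V x‖ ^ 2 + (1 - r x) * ‖w2 - V x‖ ^ 2 :=
        add_nonneg (mul_nonneg hr0 (sq_nonneg _)) (mul_nonneg (by linarith) (sq_nonneg _))
      rw [Real.norm_eq_abs, abs_of_nonneg (mul_nonneg hq hnn)]
      exact mul_le_mul_of_nonneg_left hb hq
  -- integrability of auxiliary pieces
  have hint_rq : Integrable (fun x => r x * qold x) := by
    refine Integrable.mono' hint0 ?_ ?_
    · exact (hr_meas.mul hqold_meas).aestronglyMeasurable
    · refine Filter.Eventually.of_forall fun x => ?_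
      have hr0 := (hr x).1; have hr1 := (hr x).2; have hq := hqold_nonneg x
      rw [Real.norm_eq_abs, abs_of_nonneg (by positivity)]; nlinarith
  have hint_rqV : Integrable (fun x => (r x * qold x) • V x) := by
    refine Integrable.mono' hintV.norm ?_ ?_
    · exact ((hr_meas.mul hqold_meas).smul hV_meas).aestronglyMeasurable
    · refine Filter.Eventually.of_forall fun x => ?_
      have hr0 := (hr x).1; have hr1 := (hr x).2; have hq := hqold_nonneg x
      rw [norm_smul, norm_smul, Real.norm_eq_abs, Real.norm_eq_abs,
        abs_of_nonneg (by positivity : (0:ℝ) ≤ r x * qold x), abs_of_nonneg hq]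
      nlinarith [mul_nonneg (mul_nonneg (sub_nonneg.2 hr1) hq) (norm_nonneg (V x))]
  have hint_g : Integrable (fun x => ((2 * r x - 1) * qold x) • V x) := by
    have : (fun x => ((2 * r x - 1) * qold x) • V x)
        = fun x => (2:ℝ) • ((r x * qold x) • V x) - qold x • V x := by
      funext x; rw [smul_smul]; rw [← sub_smul]; ring_nf
    have h2i : Integrable (fun x => (2:ℝ) • ((r x * qold x) • V x)) := hint_rqV.smul (2:ℝ)
    rw [this]
    exact h2i.sub hintV
  -- key integral values
  have hIrq : ∫ x, r x * qold x = α := by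
    have : (fun x => r x * qold x) = fun x => α • qp x := by
      funext x; simpa [smul_eq_mul] using hrew_p x
    rw [this, MeasureTheory.integral_smul, hq_p1, smul_eq_mul, mul_one]
  have hIrqV : ∫ x, (r x * qold x) • V x = α • vp := by
    have : (fun x => (r x * qold x) • V x) = fun x => α • (qp x • V x) := by
      funext x; rw [smul_smul, hrew_p x]
    rw [this, MeasureTheory.integral_smul, ← hvp]
  have hIg : ∫ x, ((2 * r x - 1) * qold x) • V x = (2:ℝ) • (α • vp) - vold := by
    have h1 : (fun x => ((2 * r x - 1) * qold x) • V x)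
        = fun x => (2:ℝ) • ((r x * qold x) • V x) - qold x • V x := by
      funext x; rw [smul_smul]; rw [← sub_smul]; ring_nf
    have h2i : Integrable (fun x => (2:ℝ) • ((r x * qold x) • V x)) := hint_rqV.smul (2:ℝ)
    rw [h1, MeasureTheory.integral_sub h2i hintV,
      MeasureTheory.integral_smul, hIrqV, ← hvold]
  -- constants
  set c1 : ℝ := ‖A + β • u‖ ^ 2 - ‖A + β • us‖ ^ 2 with hc1
  set c2 : ℝ := ‖B - β • u‖ ^ 2 - ‖B - β • us‖ ^ 2 with hc2
  -- pointwise difference identity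
  have hpt : ∀ x,
      qold x * (r x * ‖A + β • u - V x‖ ^ 2 + (1 - r x) * ‖B - β • u - V x‖ ^ 2)
      - qold x * (r x * ‖A + β • us - V x‖ ^ 2 + (1 - r x) * ‖B - β • us - V x‖ ^ 2)
      = (r x * qold x) * c1 + ((1 - r x) * qold x) * c2
        - 2 * ⟪δ, ((2 * r x - 1) * qold x) • V x⟫ := by
    intro x
    rw [norm_sub_sq_real (A + β • u) (V x), norm_sub_sq_real (B - β • u) (V x),
      norm_sub_sq_real (A + β • us) (V x), norm_sub_sq_real (B - β • us) (V x)]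
    simp only [hc1, hc2, hδ, real_inner_smul_right, inner_sub_left, inner_add_left,
      real_inner_smul_left]
    ring
  -- split integrals
  have hintLHS := hGint (A + β • us) (B - β • us)
  have hintRHS := hGint (A + β • u) (B - β • u)
  have hkey : (∫ x, qold x * (r x * ‖A + β • u - V x‖ ^ 2 + (1 - r x) * ‖B - β • u - V x‖ ^ 2))
      - (∫ x, qold x * (r x * ‖A + β • us - V x‖ ^ 2 + (1 - r x) * ‖B - β • us - V x‖ ^ 2))
      = α * c1 + (1 - α) * c2 - 2 * ⟪δ, (2:ℝ) • (α • vp) - vold⟫ := by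
    rw [← MeasureTheory.integral_sub hintRHS hintLHS]
    have : (fun x => qold x * (r x * ‖A + β • u - V x‖ ^ 2 + (1 - r x) * ‖B - β • u - V x‖ ^ 2)
        - qold x * (r x * ‖A + β • us - V x‖ ^ 2 + (1 - r x) * ‖B - β • us - V x‖ ^ 2))
        = fun x => (r x * qold x) * c1 + ((1 - r x) * qold x) * c2
          - 2 * ⟪δ, ((2 * r x - 1) * qold x) • V x⟫ := by
      funext x; exact hpt x
    rw [this]
    have hint_1r : Integrable (fun x => (1 - r x) * qold x) := by
      have : (fun x => (1 - r x) * qold x) = fun x => qold x - r x * qold x := by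
        funext x; ring
      rw [this]; exact hint0.sub hint_rq
    have hI1r : ∫ x, (1 - r x) * qold x = 1 - α := by
      have : (fun x => (1 - r x) * qold x) = fun x => qold x - r x * qold x := by
        funext x; ring
      rw [this, MeasureTheory.integral_sub hint0 hint_rq, hq_old1, hIrq]
    have hint_inner : Integrable (fun x => (⟪δ, ((2 * r x - 1) * qold x) • V x⟫ : ℝ)) :=
      Integrable.const_inner δ hint_g
    have hi1 : Integrable (fun x => r x * qold x * c1) := hint_rq.mul_const c1
    have hi2 : Integrable (fun x => (1 - r x) * qold x * c2) := hint_1r.mul_const c2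
    have hi12 : Integrable (fun x => r x * qold x * c1 + (1 - r x) * qold x * c2) := hi1.add hi2
    have hiin2 : Integrable (fun x => 2 * (⟪δ, ((2 * r x - 1) * qold x) • V x⟫ : ℝ)) :=
      hint_inner.const_mul 2
    rw [MeasureTheory.integral_sub hi12 hiin2, MeasureTheory.integral_add hi1 hi2]
    have e1 : ∫ x, r x * qold x * c1 = α * c1 := by
      have : (fun x => r x * qold x * c1) = fun x => c1 • (r x * qold x) := by
        funext x; simp [smul_eq_mul]; ring
      rw [this, MeasureTheory.integral_smul, hIrq, smul_eq_mul]; ring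
    have e2 : ∫ x, (1 - r x) * qold x * c2 = (1 - α) * c2 := by
      have : (fun x => (1 - r x) * qold x * c2) = fun x => c2 • ((1 - r x) * qold x) := by
        funext x; simp [smul_eq_mul]; ring
      rw [this, MeasureTheory.integral_smul, hI1r, smul_eq_mul]; ring
    have e3 : ∫ x, 2 * (⟪δ, ((2 * r x - 1) * qold x) • V x⟫ : ℝ)
        = 2 * ⟪δ, (2:ℝ) • (α • vp) - vold⟫ := by
      have : (fun x => 2 * (⟪δ, ((2 * r x - 1) * qold x) • V x⟫ : ℝ))
          = fun x => (2:ℝ) • (⟪δ, ((2 * r x - 1) * qold x) • V x⟫ : ℝ) := by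
        funext x; simp [smul_eq_mul]
      rw [this, MeasureTheory.integral_smul, integral_inner hint_g δ, hIg, smul_eq_mul]
    rw [e1, e2, e3]
  -- final algebra: the difference equals ‖δ‖^2
  have hvec : α • (A + β • us) - (1 - α) • (B - β • us) = (2:ℝ) • (α • vp) - vold := by
    rw [hA, hB, hus]
    match_scalars <;> field_simp <;> ring
  have hc1' : c1 = 2 * ⟪A + β • us, δ⟫ + ‖δ‖ ^ 2 := by
    have h : A + β • u = (A + β • us) + δ := by rw [hδ]; abel
    rw [hc1, h, norm_add_sq_real]; ring
  have hc2' : c2 = -(2 * ⟪B - β • us, δ⟫) + ‖δ‖ ^ 2 := by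
    have h : B - β • u = (B - β • us) - δ := by rw [hδ]; abel
    rw [hc2, h, norm_sub_sq_real]; ring
  have hinner : α * ⟪A + β • us, δ⟫ - (1 - α) * ⟪B - β • us, δ⟫ = ⟪(2:ℝ) • (α • vp) - vold, δ⟫ := by
    rw [← hvec]
    simp only [inner_sub_left, real_inner_smul_left]
  have hfinal : α * c1 + (1 - α) * c2 - 2 * ⟪δ, (2:ℝ) • (α • vp) - vold⟫ = ‖δ‖ ^ 2 := by
    have hcomm : (⟪δ, (2:ℝ) • (α • vp) - vold⟫ : ℝ) = ⟪(2:ℝ) • (α • vp) - vold, δ⟫ :=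
      real_inner_comm _ _
    rw [hc1', hc2', hcomm, ← hinner]; ring
  rw [hfinal] at hkey
  nlinarith [sq_nonneg ‖δ‖]
end
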